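/- Let σ be a cyclic permutation of [n], let C_1, …, C_n be the chain decomposition of the intervals along σ, and let A be a collection of intervals along σ that does not contain the skew-butterfly poset S as a weak subposet. If C_i is of type 4, type 3^R or type 3^S, then |A ∩ C_{i+1}| ≤ 1 (indices of chains taken modulo n). -/

import Mathlib

/-! Label the interval of size `m` on the chain `C (i + k)` by `(k, m)`. Intervals on one
chain are nested by size; the one of size `p` on `C i` lies in the one of size `q` on `C (i + 1)`
as soon as `⌊p/2⌋ < ⌊q/2⌋`, and the reverse inclusion holds as soon as `⌈q/2⌉ < ⌈p/2⌉`. This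
makes the lemma a statement about sizes: three sizes `s₀ < s₁ < s₂` on `C i` that are not
`j, j+1, j+2` with `j` even, together with any two sizes on `C (i + 1)`, always contain a skew
butterfly for these inclusions. A chain of type `3^R` or `3^S` supplies such a triple directly,
one of type `4` after dropping its third set. -/

open Finset

/-- The family `𝒜` contains the skew-butterfly poset `S` as a (weak) subposet:
five pairwise distinct sets `a, b, c, d, e ∈ 𝒜` with
`a ⊆ c`, `a ⊆ d`, `b ⊆ c`, `b ⊆ d` and `b ⊆ e ⊆ d`. -/
def ContainsSkewButterfly {n : ℕ} (𝒜 : Finset (Finset (Fin n))) : Prop :=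
  ∃ a b c d e : Finset (Fin n),
    a ∈ 𝒜 ∧ b ∈ 𝒜 ∧ c ∈ 𝒜 ∧ d ∈ 𝒜 ∧ e ∈ 𝒜 ∧
    a ≠ b ∧ a ≠ c ∧ a ≠ d ∧ a ≠ e ∧ b ≠ c ∧ b ≠ d ∧ b ≠ e ∧ c ≠ d ∧ c ≠ e ∧ d ≠ e ∧
    a ⊆ c ∧ a ⊆ d ∧ b ⊆ c ∧ b ⊆ d ∧ b ⊆ e ∧ e ⊆ d

/-- The interval `{x i, x (i+1), …, x (i+t)}` along the cyclic permutation `σ`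
(indices taken modulo `n`). -/
def cycInterval (n : ℕ) (σ : ZMod n ≃ Fin n) (i : ZMod n) (t : ℕ) : Finset (Fin n) :=
  (Finset.range (t + 1)).image fun s : ℕ => σ (i + (s : ZMod n))

/-- `I` is an interval along the cyclic permutation `σ`; neither `∅` nor `[n]`
is an interval. -/
def IsCycInterval (n : ℕ) (σ : ZMod n ≃ Fin n) (I : Finset (Fin n)) : Prop :=
  ∃ (i : ZMod n) (t : ℕ), t ≤ n - 2 ∧ I = cycInterval n σ i t

/-- The chain `C i` of the chain decomposition of the intervals along `σ`: it contains
exactly one interval of each size `1, 2, …, n - 1`, where the interval of size `2k` is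
`{x (i-k), …, x (i+k-1)}` and the interval of size `2k+1` is `{x (i-k), …, x (i+k)}`. -/
def chainC (n : ℕ) (σ : ZMod n ≃ Fin n) (i : ZMod n) : Finset (Finset (Fin n)) :=
  (Finset.Icc 1 (n - 1)).image fun m => cycInterval n σ (i - ((m / 2 : ℕ) : ZMod n)) (m - 1)

/-- The chain `C` is of type `3^S`: exactly `3` sets of `𝒜` on `C`, whose sizes are
not consecutive. -/
def Type3S {n : ℕ} (𝒜 C : Finset (Finset (Fin n))) : Prop :=
  (𝒜 ∩ C).card = 3 ∧ ¬ ∃ j : ℕ, (𝒜 ∩ C).image Finset.card = {j, j + 1, j + 2}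

/-- The chain `C` is of type `3^R`: exactly `3` sets of `𝒜` on `C`, with consecutive sizes
`j, j+1, j+2` where `j` is odd (two of the sets have odd size). -/
def Type3R {n : ℕ} (𝒜 C : Finset (Finset (Fin n))) : Prop :=
  (𝒜 ∩ C).card = 3 ∧ ∃ j : ℕ, Odd j ∧ (𝒜 ∩ C).image Finset.card = {j, j + 1, j + 2}

/-- The chain `C` is of type `3^L`: exactly `3` sets of `𝒜` on `C`, with consecutive sizes
`j, j+1, j+2` where `j` is even (two of the sets have even size). -/
def Type3L {n : ℕ} (𝒜 C : Finset (Finset (Fin n))) : Prop :=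
  (𝒜 ∩ C).card = 3 ∧ ∃ j : ℕ, Even j ∧ (𝒜 ∩ C).image Finset.card = {j, j + 1, j + 2}

section SkewButterfly

variable {α β : Type*}

def HasSkewButterfly (r : α → α → Prop) (s : Set α) : Prop :=
  ∃ a ∈ s, ∃ b ∈ s, ∃ c ∈ s, ∃ d ∈ s, ∃ e ∈ s,
    [a, b, c, d, e].Nodup ∧ r a c ∧ r a d ∧ r b c ∧ r b d ∧ r b e ∧ r e d

namespace HasSkewButterfly

variable {r : α → α → Prop} {s t : Set α}

theorem mono (h : HasSkewButterfly r s) (hst : s ⊆ t) : HasSkewButterfly r t := by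
  obtain ⟨a, ha, b, hb, c, hc, d, hd, e, he, h⟩ := h
  exact ⟨a, hst ha, b, hst hb, c, hst hc, d, hst hd, e, hst he, h⟩

theorem image {r' : β → β → Prop} {f : α → β} (h : HasSkewButterfly r s) (hf : s.InjOn f)
    (hr : ∀ x ∈ s, ∀ y ∈ s, r x y → r' (f x) (f y)) : HasSkewButterfly r' (f '' s) := by
  obtain ⟨a, ha, b, hb, c, hc, d, hd, e, he, hnd, hac, had, hbc, hbd, hbe, hed⟩ := h
  have hmem : ∀ x ∈ [a, b, c, d, e], x ∈ s := by simp [ha, hb, hc, hd, he]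
  exact ⟨f a, Set.mem_image_of_mem f ha, f b, Set.mem_image_of_mem f hb,
    f c, Set.mem_image_of_mem f hc, f d, Set.mem_image_of_mem f hd,
    f e, Set.mem_image_of_mem f he,
    hnd.map_on fun x hx y hy hxy => hf (hmem x hx) (hmem y hy) hxy,
    hr _ ha _ hc hac, hr _ ha _ hd had, hr _ hb _ hc hbc, hr _ hb _ hd hbd, hr _ hb _ he hbe,
    hr _ he _ hd hed⟩

end HasSkewButterfly

theorem containsSkewButterfly_of_hasSkewButterfly {n : ℕ} {𝒜 : Finset (Finset (Fin n))}
    (h : HasSkewButterfly (· ⊆ ·) (𝒜 : Set (Finset (Fin n)))) : ContainsSkewButterfly 𝒜 := by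
  obtain ⟨a, ha, b, hb, c, hc, d, hd, e, he, hnd, hac, had, hbc, hbd, hbe, hed⟩ := h
  simp only [List.nodup_cons, List.mem_cons, List.not_mem_nil, or_false, not_or,
    List.nodup_nil] at hnd
  obtain ⟨⟨hab, hac', had', hae⟩, ⟨hbc', hbd', hbe'⟩, ⟨hcd, hce⟩, hde, -⟩ := hnd
  exact ⟨a, b, c, d, e, ha, hb, hc, hd, he, hab, hac', had', hae, hbc', hbd', hbe', hcd, hce,
    hde, hac, had, hbc, hbd, hbe, hed⟩

end SkewButterfly

section ChainIntervals

variable {n : ℕ} (σ : ZMod n ≃ Fin n)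

theorem mem_cycInterval {i y : ZMod n} {t : ℕ} :
    σ y ∈ cycInterval n σ i t ↔ ∃ s ≤ t, i + s = y := by
  simp [cycInterval]

theorem cycInterval_add_subset {i : ZMod n} {d t t' : ℕ} (h : d + t ≤ t') :
    cycInterval n σ (i + d) t ⊆ cycInterval n σ i t' := by
  simp only [cycInterval, Finset.image_subset_iff, Finset.mem_range, Finset.mem_image]
  intro s hs
  exact ⟨d + s, by omega, congrArg σ (by push_cast; ring)⟩

theorem card_cycInterval {i : ZMod n} {t : ℕ} (h : t < n) :
    #(cycInterval n σ i t) = t + 1 := by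
  rw [cycInterval, card_image_of_injOn, card_range]
  intro a ha b hb hab
  simp only [coe_range, Set.mem_Iio] at ha hb
  have := (ZMod.natCast_eq_natCast_iff' a b n).mp (add_left_cancel (σ.injective hab))
  rwa [Nat.mod_eq_of_lt (by omega), Nat.mod_eq_of_lt (by omega)] at this

theorem sub_one_notMem_cycInterval {i : ZMod n} {t : ℕ} (h : t + 1 < n) :
    σ (i - 1) ∉ cycInterval n σ i t := by
  rintro hmem
  obtain ⟨s, hs, hi⟩ := (mem_cycInterval σ).mp hmem
  have : ((s + 1 : ℕ) : ZMod n) = 0 := by push_cast; linear_combination hi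
  have := Nat.le_of_dvd s.succ_pos ((ZMod.natCast_eq_zero_iff _ _).mp this)
  omega

def chainInterval (i : ZMod n) (m : ℕ) : Finset (Fin n) :=
  cycInterval n σ (i - (m / 2 : ℕ)) (m - 1)

theorem chainC_eq_image (i : ZMod n) :
    chainC n σ i = (Icc 1 (n - 1)).image (chainInterval σ i) := rfl

theorem card_chainInterval {i : ZMod n} {m : ℕ} (h₀ : 0 < m) (h : m < n) :
    #(chainInterval σ i m) = m := by
  rw [chainInterval, card_cycInterval σ (by omega)]
  omega

theorem chainInterval_mono {i : ZMod n} {p q : ℕ} (h : p ≤ q) :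
    chainInterval σ i p ⊆ chainInterval σ i q := by
  have hstart : i - (p / 2 : ℕ) = i - (q / 2 : ℕ) + (q / 2 - p / 2 : ℕ) := by
    rw [Nat.cast_sub (Nat.div_le_div_right h)]; ring
  rw [chainInterval, hstart]
  exact cycInterval_add_subset σ (by omega)

theorem chainInterval_subset_succ {i : ZMod n} {p q : ℕ} (h : p / 2 < q / 2) :
    chainInterval σ i p ⊆ chainInterval σ (i + 1) q := by
  have hstart : i - (p / 2 : ℕ) = i + 1 - (q / 2 : ℕ) + (q / 2 - (p / 2 + 1) : ℕ) := by
    rw [Nat.cast_sub h]; push_cast; ring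
  rw [chainInterval, hstart]
  exact cycInterval_add_subset σ (by omega)

theorem chainInterval_succ_subset {i : ZMod n} {p q : ℕ} (hq : 0 < q)
    (h : (q + 1) / 2 < (p + 1) / 2) : chainInterval σ (i + 1) q ⊆ chainInterval σ i p := by
  have hstart : i + 1 - (q / 2 : ℕ) = i - (p / 2 : ℕ) + (p / 2 + 1 - q / 2 : ℕ) := by
    rw [Nat.cast_sub (by omega)]; push_cast; ring
  rw [chainInterval, hstart]
  exact cycInterval_add_subset σ (by omega)

theorem chainInterval_ne_succ {i : ZMod n} {m : ℕ} (h₀ : 0 < m) (h : m < n) :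
    chainInterval σ i m ≠ chainInterval σ (i + 1) m := by
  intro heq
  have hmem : σ (i - (m / 2 : ℕ)) ∈ chainInterval σ i m :=
    (mem_cycInterval σ).mpr ⟨0, Nat.zero_le _, by simp⟩
  rw [heq, chainInterval, show i - (m / 2 : ℕ) = i + 1 - (m / 2 : ℕ) - 1 by ring] at hmem
  exact sub_one_notMem_cycInterval σ (by omega) hmem

/-- The label `(k, m)` stands for `chainInterval σ (i + k) m`, the interval of size `m` on the
chain `C (i + k)`; `ChainLE` is an arithmetic condition under which such intervals are nested. -/
def ChainLE (x y : ℕ × ℕ) : Prop :=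
  (x.1 = y.1 ∧ x.2 ≤ y.2) ∨ (y.1 = x.1 + 1 ∧ x.2 / 2 < y.2 / 2) ∨
    (x.1 = y.1 + 1 ∧ 0 < x.2 ∧ (x.2 + 1) / 2 < (y.2 + 1) / 2)

theorem chainInterval_subset_of_chainLE (i : ZMod n) {x y : ℕ × ℕ} (h : ChainLE x y) :
    chainInterval σ (i + x.1) x.2 ⊆ chainInterval σ (i + y.1) y.2 := by
  obtain ⟨k, p⟩ := x
  obtain ⟨l, q⟩ := y
  rcases h with ⟨rfl, h⟩ | ⟨rfl, h⟩ | ⟨rfl, hp, h⟩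
  · exact chainInterval_mono σ h
  · simpa [add_assoc] using chainInterval_subset_succ σ (i := i + k) h
  · simpa [add_assoc] using chainInterval_succ_subset σ (i := i + l) hp h

theorem chainInterval_injOn (i : ZMod n) :
    Set.InjOn (fun x : ℕ × ℕ => chainInterval σ (i + x.1) x.2)
      {x | x.1 ≤ 1 ∧ 0 < x.2 ∧ x.2 < n} := by
  rintro ⟨k, p⟩ ⟨hk, hp, hpn⟩ ⟨l, q⟩ ⟨hl, hq, hqn⟩ heq
  dsimp only at hp hpn hq hqn heq
  obtain rfl : p = q := by
    rw [← card_chainInterval σ hp hpn (i := i + k), heq, card_chainInterval σ hq hqn]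
  interval_cases k <;> interval_cases l <;>
    simp only [Nat.cast_zero, Nat.cast_one, add_zero] at heq
  · rfl
  · exact absurd heq (chainInterval_ne_succ σ hp hpn)
  · exact absurd heq.symm (chainInterval_ne_succ σ hp hpn)
  · rfl

variable (𝒜 : Finset (Finset (Fin n))) (i : ZMod n)

def chainSizes : Finset ℕ :=
  {m ∈ Icc 1 (n - 1) | chainInterval σ i m ∈ 𝒜}

theorem mem_chainSizes {m : ℕ} :
    m ∈ chainSizes σ 𝒜 i ↔ 0 < m ∧ m < n ∧ chainInterval σ i m ∈ 𝒜 := by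
  simp only [chainSizes, mem_filter, mem_Icc]
  exact ⟨fun ⟨⟨h₁, h₂⟩, h⟩ => ⟨by omega, by omega, h⟩,
    fun ⟨h₁, h₂, h⟩ => ⟨⟨h₁, by omega⟩, h⟩⟩

theorem inter_chainC_eq_image :
    𝒜 ∩ chainC n σ i = (chainSizes σ 𝒜 i).image (chainInterval σ i) := by
  ext S
  simp only [mem_inter, chainC_eq_image, mem_image, chainSizes, mem_filter]
  constructor
  · rintro ⟨hS, m, hm, rfl⟩
    exact ⟨m, ⟨hm, hS⟩, rfl⟩
  · rintro ⟨m, ⟨hm, hS⟩, rfl⟩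
    exact ⟨hS, m, hm, rfl⟩

theorem card_chainInterval_of_mem_chainSizes {m : ℕ} (hm : m ∈ chainSizes σ 𝒜 i) :
    #(chainInterval σ i m) = m := by
  obtain ⟨h₀, h, -⟩ := (mem_chainSizes σ 𝒜 i).mp hm
  exact card_chainInterval σ h₀ h

theorem image_card_inter_chainC : (𝒜 ∩ chainC n σ i).image card = chainSizes σ 𝒜 i := by
  rw [inter_chainC_eq_image, image_image]
  exact (image_congr fun m hm => card_chainInterval_of_mem_chainSizes σ 𝒜 i hm).trans image_id

theorem card_inter_chainC : #(𝒜 ∩ chainC n σ i) = #(chainSizes σ 𝒜 i) := by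
  rw [inter_chainC_eq_image, card_image_of_injOn]
  intro p hp q hq heq
  rw [← card_chainInterval_of_mem_chainSizes σ 𝒜 i hp,
    ← card_chainInterval_of_mem_chainSizes σ 𝒜 i hq, heq]

theorem containsSkewButterfly_of_chainLE
    (h : HasSkewButterfly ChainLE {x : ℕ × ℕ | x.1 ≤ 1 ∧ x.2 ∈ chainSizes σ 𝒜 (i + x.1)}) :
    ContainsSkewButterfly 𝒜 := by
  apply containsSkewButterfly_of_hasSkewButterfly
  refine (h.image ((chainInterval_injOn σ i).mono ?_) ?_).mono ?_
  · rintro x ⟨hk, hx⟩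
    exact ⟨hk, ((mem_chainSizes σ 𝒜 _).mp hx).1, ((mem_chainSizes σ 𝒜 _).mp hx).2.1⟩
  · exact fun x _ y _ hxy => chainInterval_subset_of_chainLE σ i hxy
  · rintro _ ⟨x, ⟨-, hx⟩, rfl⟩
    exact ((mem_chainSizes σ 𝒜 _).mp hx).2.2

end ChainIntervals

theorem hasSkewButterfly_chainLE {s₀ s₁ s₂ m₀ m₁ : ℕ} (hs₀₁ : s₀ < s₁) (hs₁₂ : s₁ < s₂)
    (hm₀ : 0 < m₀) (hm₀₁ : m₀ < m₁) (hL : ¬(s₁ = s₀ + 1 ∧ s₂ = s₀ + 2 ∧ Even s₀)) :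
    HasSkewButterfly ChainLE {(0, s₀), (0, s₁), (0, s₂), (1, m₀), (1, m₁)} := by
  rw [Nat.even_iff] at hL
  by_cases hA : (m₀ + 1) / 2 < (s₂ + 1) / 2 ∧ s₀ / 2 < m₁ / 2
  · refine ⟨(1, m₀), by simp, (0, s₀), by simp, (1, m₁), by simp, (0, s₂), by simp,
      (0, s₁), by simp, ?_⟩
    simp only [List.nodup_cons, List.mem_cons, List.not_mem_nil, List.nodup_nil, Prod.mk.injEq,
      true_and, or_false, not_false_eq_true, and_true, ChainLE]
    omega
  by_cases hB : s₀ / 2 < m₀ / 2 ∧ s₁ / 2 < m₁ / 2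
  · refine ⟨(0, s₁), by simp, (0, s₀), by simp, (0, s₂), by simp, (1, m₁), by simp,
      (1, m₀), by simp, ?_⟩
    simp only [List.nodup_cons, List.mem_cons, List.not_mem_nil, List.nodup_nil, Prod.mk.injEq,
      true_and, or_false, not_false_eq_true, and_true, ChainLE]
    omega
  -- Failing both patterns above forces `s₀, s₁, s₂` to be consecutive with `s₀` even.
  · refine ⟨(0, s₀), by simp, (1, m₀), by simp, (0, s₁), by simp, (0, s₂), by simp,
      (1, m₁), by simp, ?_⟩
    simp only [List.nodup_cons, List.mem_cons, List.not_mem_nil, List.nodup_nil, Prod.mk.injEq,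
      true_and, or_false, not_false_eq_true, and_true, ChainLE]
    omega

theorem exists_strictMono_mem_of_le_card {α : Type*} [LinearOrder α] {s : Finset α} {k : ℕ}
    (h : k ≤ #s) : ∃ f : Fin k → α, StrictMono f ∧ ∀ j, f j ∈ s := by
  obtain ⟨t, hts, ht⟩ := exists_subset_card_eq h
  exact ⟨t.orderEmbOfFin ht, (t.orderEmbOfFin ht).strictMono,
    fun j => hts (t.orderEmbOfFin_mem ht j)⟩

theorem exists_three_sizes_not_type3L {S : Finset ℕ}
    (h : #S = 4 ∨ (#S = 3 ∧ ∃ j, Odd j ∧ S = {j, j + 1, j + 2}) ∨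
      (#S = 3 ∧ ¬∃ j, S = {j, j + 1, j + 2})) :
    ∃ s₀ ∈ S, ∃ s₁ ∈ S, ∃ s₂ ∈ S,
      s₀ < s₁ ∧ s₁ < s₂ ∧ ¬(s₁ = s₀ + 1 ∧ s₂ = s₀ + 2 ∧ Even s₀) := by
  rcases h with h4 | ⟨-, j, hj, rfl⟩ | ⟨h3, hnot⟩
  · obtain ⟨f, hf, hfS⟩ := exists_strictMono_mem_of_le_card h4.ge
    have h01 := hf (show (0 : Fin 4) < 1 by decide)
    have h12 := hf (show (1 : Fin 4) < 2 by decide)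
    have h23 := hf (show (2 : Fin 4) < 3 by decide)
    exact ⟨f 0, hfS 0, f 1, hfS 1, f 3, hfS 3, h01, h12.trans h23, by omega⟩
  · exact ⟨j, by simp, j + 1, by simp, j + 2, by simp, by omega, by omega,
      fun h => Nat.not_even_iff_odd.mpr hj h.2.2⟩
  · obtain ⟨f, hf, hfS⟩ := exists_strictMono_mem_of_le_card h3.ge
    have h01 := hf (show (0 : Fin 3) < 1 by decide)
    have h12 := hf (show (1 : Fin 3) < 2 by decide)
    refine ⟨f 0, hfS 0, f 1, hfS 1, f 2, hfS 2, h01, h12, fun ⟨h1, h2, _⟩ => hnot ⟨f 0, ?_⟩⟩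
    rw [← h1, ← h2]
    refine (eq_of_subset_of_card_le ?_ ?_).symm
    · simp [insert_subset_iff, hfS]
    · rw [h3, card_eq_three.mpr ⟨f 0, f 1, f 2, h01.ne, (h01.trans h12).ne, h12.ne, rfl⟩]

theorem skew_butterfly_chain_lemma1_general (n : ℕ) (σ : ZMod n ≃ Fin n)
    (𝒜 : Finset (Finset (Fin n)))
    (hS : ¬ ContainsSkewButterfly 𝒜) (i : ZMod n)
    (hi : (𝒜 ∩ chainC n σ i).card = 4 ∨ Type3R 𝒜 (chainC n σ i) ∨ Type3S 𝒜 (chainC n σ i)) :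
    (𝒜 ∩ chainC n σ (i + 1)).card ≤ 1 := by
  simp only [Type3R, Type3S, card_inter_chainC, image_card_inter_chainC] at hi ⊢
  obtain ⟨s₀, hs₀, s₁, hs₁, s₂, hs₂, hs₀₁, hs₁₂, hL⟩ := exists_three_sizes_not_type3L hi
  by_contra! h
  obtain ⟨m, hm, hmS⟩ := exists_strictMono_mem_of_le_card h
  have hm₀ : 0 < m 0 := ((mem_chainSizes σ 𝒜 _).mp (hmS 0)).1
  have hm₀₁ : m 0 < m 1 := hm (by decide)
  apply hS (containsSkewButterfly_of_chainLE σ 𝒜 i _)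
  refine (hasSkewButterfly_chainLE hs₀₁ hs₁₂ hm₀ hm₀₁ hL).mono ?_
  simp [Set.insert_subset_iff, hs₀, hs₁, hs₂, hmS]

/-- If `C i` is of type `4`, `3^R` or `3^S`, then the next chain `C (i+1)` meets `𝒜`
in at most one set. -/
theorem skew_butterfly_chain_lemma1 (n : ℕ) (σ : ZMod n ≃ Fin n)
    (𝒜 : Finset (Finset (Fin n))) (hInt : ∀ I ∈ 𝒜, IsCycInterval n σ I)
    (hS : ¬ ContainsSkewButterfly 𝒜) (i : ZMod n)
    (hi : (𝒜 ∩ chainC n σ i).card = 4 ∨ Type3R 𝒜 (chainC n σ i) ∨ Type3S 𝒜 (chainC n σ i)) :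
    (𝒜 ∩ chainC n σ (i + 1)).card ≤ 1 :=
  skew_butterfly_chain_lemma1_general n σ 𝒜 hS i hi
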